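/- arXiv:math/0405584 — 4 statements merged into one kernel-verified Lean document; each statement's English description precedes it below -/
import Mathlib

section
/- Let (P,J) be a complex product structure on a real Lie algebra 𝔤 and set Q = JP. Then Q is an integrable product structure: Q² = 1 and its Nijenhuis tensor N_Q(X,Y) = [QX,QY] + [X,Y] - Q[QX,Y] - Q[X,QY] vanishes identically. -/
/-- If `(P, J)` is a complex product structure on a real Lie algebra `𝔤`, then `Q = JP`
is an integrable product structure: `Q² = 1` and its Nijenhuis tensor vanishes. -/
theorem Q_is_integrable_product_structure
    (L : Type*) [LieRing L] [LieAlgebra ℝ L]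
    (P J : Module.End ℝ L)
    (hP : P ^ 2 = 1) (hJ : J ^ 2 = -1) (hPJ : P * J = -(J * P))
    (hNP : ∀ X Y : L, ⁅P X, P Y⁆ + ⁅X, Y⁆ - P ⁅P X, Y⁆ - P ⁅X, P Y⁆ = 0)
    (hNJ : ∀ X Y : L, ⁅J X, J Y⁆ - ⁅X, Y⁆ - J ⁅J X, Y⁆ - J ⁅X, J Y⁆ = 0) :
    let Q := J * P
    Q ^ 2 = 1 ∧
    (∀ X Y : L, ⁅Q X, Q Y⁆ + ⁅X, Y⁆ - Q ⁅Q X, Y⁆ - Q ⁅X, Q Y⁆ = 0) := by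
  intro Q
  have hP' : ∀ x : L, P (P x) = x := by
    intro x
    simpa [pow_two, Module.End.mul_apply] using congrFun (congrArg DFunLike.coe hP) x
  have hJ' : ∀ x : L, J (J x) = -x := by
    intro x
    simpa [pow_two, Module.End.mul_apply] using congrFun (congrArg DFunLike.coe hJ) x
  have hPJ' : ∀ x : L, P (J x) = -(J (P x)) := by
    intro x
    simpa [Module.End.mul_apply] using congrFun (congrArg DFunLike.coe hPJ) x
  constructor
  · -- Q ^ 2 = 1
    ext x
    simp [Q, pow_two, Module.End.mul_apply, hPJ', hP', hJ']
  · intro X Y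
    have hQ : ∀ x : L, Q x = J (P x) := fun x => rfl
    have h1 := hNP X Y
    have h2 := hNJ X Y
    have h3 := hNJ (P X) (P Y)
    have h4 := hNP (J X) (J Y)
    have h5 := congrArg P (hNJ X (P Y))
    have h6 := congrArg P (hNJ (P X) Y)
    have h7 := congrArg J (hNP X (J Y))
    have h8 := congrArg J (hNP (J X) Y)
    simp only [map_add, map_sub, map_neg, map_zero, hP', hJ', hPJ', lie_neg, neg_lie,
      neg_neg] at h1 h2 h3 h4 h5 h6 h7 h8
    simp only [hQ, map_add, map_sub, map_neg, hP', hJ', hPJ', lie_neg, neg_lie, neg_neg]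
    have htwo : ∀ z : L, z + z = 0 → z = 0 := by
      intro z hz
      have : (2 : ℝ) • z = 0 := by rw [two_smul]; exact hz
      simpa using (smul_eq_zero.mp this).resolve_left (by norm_num)
    apply htwo
    linear_combination (norm := abel) h1 - h2 + h3 + h4 - h5 - h6 - h7 - h8
end

section
/- The Killing form of sl(n,ℝ) for n odd is not of neutral signature; in particular no symmetric nondegenerate bilinear form proportional to it can satisfy g(PX,PY) = -g(X,Y) for an involution P anticommuting with a complex structure J. Hence sl(2m-1,ℝ) admits no complex product structure compatible with (a multiple of) its Killing form. -/
open LieAlgebra Module Matrix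

section Aux

variable (n : ℕ)

/-- The anti-symmetrization map on `sl n ℝ`. -/
noncomputable def slLmap : SpecialLinear.sl (Fin n) ℝ →ₗ[ℝ] Matrix (Fin n) (Fin n) ℝ where
  toFun X := (X : Matrix (Fin n) (Fin n) ℝ) - (X : Matrix (Fin n) (Fin n) ℝ)ᵀ
  map_add' X Y := by
    simp [Matrix.transpose_add]
    abel
  map_smul' c X := by
    have h : ((c • X : SpecialLinear.sl (Fin n) ℝ) : Matrix (Fin n) (Fin n) ℝ)
        = c • (X : Matrix (Fin n) (Fin n) ℝ) := rfl
    simp [h, Matrix.transpose_smul, smul_sub]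

/-- The symmetric traceless matrices inside `sl n ℝ`. -/
noncomputable def slSym : Submodule ℝ (SpecialLinear.sl (Fin n) ℝ) :=
  LinearMap.ker (slLmap n)

lemma mem_slSym_iff (X : SpecialLinear.sl (Fin n) ℝ) :
    X ∈ slSym n ↔ (X : Matrix (Fin n) (Fin n) ℝ)ᵀ = (X : Matrix (Fin n) (Fin n) ℝ) := by
  simp [slSym, slLmap, LinearMap.mem_ker, sub_eq_zero, eq_comm]

lemma trace_sq_pos {X : SpecialLinear.sl (Fin n) ℝ} (hX : X ∈ slSym n) (hX0 : X ≠ 0) :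
    0 < Matrix.trace ((X : Matrix (Fin n) (Fin n) ℝ) * (X : Matrix (Fin n) (Fin n) ℝ)) := by
  rw [mem_slSym_iff] at hX
  have h : Matrix.trace ((X : Matrix (Fin n) (Fin n) ℝ) * (X : Matrix (Fin n) (Fin n) ℝ))
      = ∑ i, ∑ j, ((X : Matrix (Fin n) (Fin n) ℝ) i j) ^ 2 := by
    have hsymm : ∀ a b, (X : Matrix (Fin n) (Fin n) ℝ) a b
        = (X : Matrix (Fin n) (Fin n) ℝ) b a := fun a b =>
      (congrFun (congrFun hX a) b).symm.trans (Matrix.transpose_apply _ a b)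
    simp only [Matrix.trace, Matrix.mul_apply, Matrix.diag, sq]
    refine Finset.sum_congr rfl fun i _ => Finset.sum_congr rfl fun j _ => by rw [hsymm j i]
  rw [h]
  have hne : (X : Matrix (Fin n) (Fin n) ℝ) ≠ 0 := by
    intro h0
    exact hX0 (Subtype.ext h0)
  obtain ⟨i, j, hij⟩ : ∃ i j, (X : Matrix (Fin n) (Fin n) ℝ) i j ≠ 0 := by
    by_contra hc
    push_neg at hc
    exact hne (by ext i j; simp [hc])
  have hnonneg : ∀ i ∈ Finset.univ, (0:ℝ) ≤ ∑ j, ((X : Matrix (Fin n) (Fin n) ℝ) i j) ^ 2 := by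
    intro i _
    positivity
  refine Finset.sum_pos' hnonneg ⟨i, Finset.mem_univ i, ?_⟩
  have : (0:ℝ) < ((X : Matrix (Fin n) (Fin n) ℝ) i j) ^ 2 := by positivity
  refine Finset.sum_pos' (fun j _ => by positivity) ⟨j, Finset.mem_univ j, this⟩

end Aux

section Dim

variable (n : ℕ)

/-- Symmetrization of the upper-triangular part. -/
noncomputable def symLin : Matrix (Fin n) (Fin n) ℝ →ₗ[ℝ] Matrix (Fin n) (Fin n) ℝ where
  toFun A := Matrix.of fun i j => A (min i j) (max i j)
  map_add' A B := by ext i j; simp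
  map_smul' c A := by ext i j; simp

lemma range_slLmap_skew {A : Matrix (Fin n) (Fin n) ℝ}
    (hA : A ∈ LinearMap.range (slLmap n)) : Aᵀ = -A := by
  obtain ⟨X, rfl⟩ := hA
  simp [slLmap]

lemma range_slLmap_diag {A : Matrix (Fin n) (Fin n) ℝ}
    (hA : A ∈ LinearMap.range (slLmap n)) (i : Fin n) : A i i = 0 := by
  have h := congrFun (congrFun (range_slLmap_skew n hA) i) i
  simp only [Matrix.transpose_apply, Matrix.neg_apply] at h
  linarith

lemma symLin_mem_sl {A : Matrix (Fin n) (Fin n) ℝ}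
    (hA : A ∈ LinearMap.range (slLmap n)) :
    symLin n A ∈ SpecialLinear.sl (Fin n) ℝ := by
  show Matrix.trace (symLin n A) = 0
  have : ∀ i, symLin n A i i = 0 := fun i => by
    simp [symLin, range_slLmap_diag n hA i]
  simp [Matrix.trace, Matrix.diag, this]

/-- The injection of the antisymmetric part into `sl`. -/
noncomputable def symBack : ↥(LinearMap.range (slLmap n)) →ₗ[ℝ] ↥(SpecialLinear.sl (Fin n) ℝ) where
  toFun A := ⟨symLin n A.val, symLin_mem_sl n A.2⟩
  map_add' A B := Subtype.ext (map_add (symLin n) A.val B.val)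
  map_smul' c A := Subtype.ext (map_smul (symLin n) c A.val)

lemma symBack_injective : Function.Injective (symBack n) := by
  rw [← LinearMap.ker_eq_bot, LinearMap.ker_eq_bot']
  intro A hA
  have h0 : symLin n A.val = 0 := congrArg Subtype.val hA
  have hskew := range_slLmap_skew n A.2
  have hpt : ∀ a b, A.val (min a b) (max a b) = 0 := fun a b => by
    have := congrFun (congrFun h0 a) b
    simpa [symLin] using this
  apply Subtype.ext
  ext i j
  rcases le_total i j with hij | hij
  · have := hpt i j
    rw [min_eq_left hij, max_eq_right hij] at this
    simp [this]
  · have h1 := hpt j i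
    rw [min_eq_left hij, max_eq_right hij] at h1
    have h2 := congrFun (congrFun hskew i) j
    simp only [Matrix.transpose_apply, Matrix.neg_apply] at h2
    rw [h1] at h2
    have : A.val i j = 0 := by linarith
    simp [this]

lemma symBack_range_le : LinearMap.range (symBack n) ≤ slSym n := by
  rintro _ ⟨A, rfl⟩
  rw [mem_slSym_iff]
  show (symLin n A.val)ᵀ = symLin n A.val
  ext i j
  simp [symLin, min_comm, max_comm]

lemma dim_key (hn : 2 ≤ n) :
    finrank ℝ ↥(SpecialLinear.sl (Fin n) ℝ) < 2 * finrank ℝ ↥(slSym n) := by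
  set i0 : Fin n := ⟨0, by omega⟩ with hi0
  set i1 : Fin n := ⟨1, by omega⟩ with hi1
  have hne : i0 ≠ i1 := by
    intro h
    simpa [hi0, hi1, Fin.mk.injEq] using congrArg Fin.val h
  have hsymmstd : ∀ k : Fin n, (Matrix.single k k (1:ℝ))ᵀ
      = Matrix.single k k (1:ℝ) := by
    intro k
    ext a b
    simp [Matrix.single, and_comm]
  have hx0mem : (Matrix.single i0 i0 (1:ℝ) - Matrix.single i1 i1 (1:ℝ))
      ∈ SpecialLinear.sl (Fin n) ℝ := by
    show Matrix.trace (Matrix.single i0 i0 (1:ℝ) - Matrix.single i1 i1 (1:ℝ)) = 0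
    rw [Matrix.trace_sub, Matrix.trace_single_eq_same, Matrix.trace_single_eq_same, sub_self]
  set x0 : ↥(SpecialLinear.sl (Fin n) ℝ) :=
    ⟨Matrix.single i0 i0 (1:ℝ) - Matrix.single i1 i1 (1:ℝ), hx0mem⟩ with hx0
  have hx0S : x0 ∈ slSym n := by
    rw [mem_slSym_iff]
    show (Matrix.single i0 i0 (1:ℝ) - Matrix.single i1 i1 (1:ℝ))ᵀ = _
    rw [Matrix.transpose_sub, hsymmstd, hsymmstd]
  have hx0notin : x0 ∉ LinearMap.range (symBack n) := by
    rintro ⟨A, hA⟩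
    have hv : symLin n A.val = (x0 : Matrix (Fin n) (Fin n) ℝ) := congrArg Subtype.val hA
    have h1 := congrFun (congrFun hv i0) i0
    have h2 : symLin n A.val i0 i0 = 0 := by
      simp [symLin, range_slLmap_diag n A.2 i0]
    rw [h2] at h1
    have h3 : (x0 : Matrix (Fin n) (Fin n) ℝ) i0 i0 = 1 := by
      have hne' : i1 ≠ i0 := Ne.symm hne
      simp [hx0, Matrix.sub_apply, Matrix.single, hne']
    rw [h3] at h1
    exact one_ne_zero h1.symm
  have hlt : LinearMap.range (symBack n) < slSym n :=
    lt_of_le_of_ne (symBack_range_le n) (fun h => hx0notin (h ▸ hx0S))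
  have hdimlt : finrank ℝ ↥(LinearMap.range (symBack n)) < finrank ℝ ↥(slSym n) :=
    Submodule.finrank_lt_finrank_of_lt hlt
  have hrange : finrank ℝ ↥(LinearMap.range (symBack n))
      = finrank ℝ ↥(LinearMap.range (slLmap n)) :=
    LinearMap.finrank_range_of_inj (symBack_injective n)
  have hrn : finrank ℝ ↥(LinearMap.range (slLmap n)) + finrank ℝ ↥(slSym n)
      = finrank ℝ ↥(SpecialLinear.sl (Fin n) ℝ) :=
    LinearMap.finrank_range_add_finrank_ker (slLmap n)
  omega

end Dim

set_option maxHeartbeats 2000000 in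
/-- The Killing form `B(X,Y) = 2n·tr(XY)` of `sl(n,ℝ)` for odd `n = 2m-1` (`m > 1`) is not of
neutral signature; and no nonzero multiple `g = c·B` of it can satisfy `g(JX,JY) = g(X,Y)`
and `g(PX,PY) = -g(X,Y)` for an involution `P` anticommuting with a complex structure `J`.
Hence `sl(2m-1,ℝ)` admits no complex product structure compatible with a multiple of its
Killing form. -/
theorem sl_odd_killing_not_neutral_no_compatible_cps (m : ℕ) (hm : 1 < m)
    (B : SpecialLinear.sl (Fin (2 * m - 1)) ℝ → SpecialLinear.sl (Fin (2 * m - 1)) ℝ → ℝ)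
    (hB : ∀ X Y, B X Y = (2 * (2 * m - 1) : ℝ) *
      Matrix.trace ((X : Matrix (Fin (2 * m - 1)) (Fin (2 * m - 1)) ℝ) *
        (Y : Matrix (Fin (2 * m - 1)) (Fin (2 * m - 1)) ℝ))) :
    (¬ ∃ Wp Wn : Submodule ℝ (SpecialLinear.sl (Fin (2 * m - 1)) ℝ),
        IsCompl Wp Wn ∧
        (∀ x ∈ Wp, x ≠ 0 → 0 < B x x) ∧
        (∀ x ∈ Wn, x ≠ 0 → B x x < 0) ∧
        Module.finrank ℝ Wp = Module.finrank ℝ Wn) ∧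
    (¬ ∃ (c : ℝ) (P J : Module.End ℝ (SpecialLinear.sl (Fin (2 * m - 1)) ℝ)),
        c ≠ 0 ∧ P ^ 2 = 1 ∧ J ^ 2 = -1 ∧ P * J = -(J * P) ∧
        (∀ X Y, c * B (J X) (J Y) = c * B X Y) ∧
        (∀ X Y, c * B (P X) (P Y) = -(c * B X Y))) := by
  have hn : 2 ≤ 2 * m - 1 := by omega
  have hmr : (2:ℝ) ≤ (m:ℝ) := by exact_mod_cast hm
  have hcoeff : (0:ℝ) < (2 * (2 * m - 1) : ℝ) := by nlinarith
  have hBpos : ∀ x ∈ slSym (2 * m - 1), x ≠ 0 → 0 < B x x := by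
    intro x hx hx0
    rw [hB]
    exact mul_pos hcoeff (trace_sq_pos _ hx hx0)
  have hkey := dim_key (2 * m - 1) hn
  constructor
  · rintro ⟨Wp, Wn, hcompl, hpos, hneg, hdim⟩
    have hdisj : slSym (2 * m - 1) ⊓ Wn = ⊥ := by
      rw [Submodule.eq_bot_iff]
      intro z hz
      by_contra hz0
      have h1 := hBpos z hz.1 hz0
      have h2 := hneg z hz.2 hz0
      linarith
    have h3 := Submodule.finrank_sup_add_finrank_inf_eq (slSym (2 * m - 1)) Wn
    rw [hdisj] at h3
    simp only [finrank_bot, add_zero] at h3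
    have h4 : finrank ℝ ↥(slSym (2 * m - 1) ⊔ Wn)
        ≤ finrank ℝ ↥(SpecialLinear.sl (Fin (2 * m - 1)) ℝ) := Submodule.finrank_le _
    have h5 := Submodule.finrank_add_eq_of_isCompl hcompl
    omega
  · rintro ⟨c, P, Jc, hc, hP2, hJ2, hPJ, hgJ, hgP⟩
    have hPP : P ∘ₗ P = LinearMap.id := by
      rw [← Module.End.mul_eq_comp, ← pow_two, hP2]
      exact Module.End.one_eq_id
    have hPinj : Function.Injective P := by
      intro a b hab
      have := congrArg P hab
      calc a = (P ∘ₗ P) a := by rw [hPP]; rfl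
      _ = (P ∘ₗ P) b := by simpa using this
      _ = b := by rw [hPP]; rfl
    have hWrank : finrank ℝ ↥((slSym (2 * m - 1)).map P) = finrank ℝ ↥(slSym (2 * m - 1)) := by
      rw [← LinearMap.range_domRestrict]
      exact LinearMap.finrank_range_of_inj fun a b hab =>
        Subtype.ext (hPinj (by simpa [LinearMap.domRestrict_apply] using hab))
    have hdisj : slSym (2 * m - 1) ⊓ (slSym (2 * m - 1)).map P = ⊥ := by
      rw [Submodule.eq_bot_iff]
      intro z hz
      by_contra hz0
      obtain ⟨x, hxS, hxz⟩ := Submodule.mem_map.mp hz.2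
      have hx0 : x ≠ 0 := by
        rintro rfl
        apply hz0
        rw [← hxz, map_zero]
      have h1 := hBpos z hz.1 hz0
      have h2 := hBpos x hxS hx0
      have h3 := hgP x x
      rw [hxz] at h3
      have hsum : c * (B z z + B x x) = 0 := by ring_nf; linarith
      rcases mul_eq_zero.mp hsum with h | h
      · exact hc h
      · linarith
    have h3 := Submodule.finrank_sup_add_finrank_inf_eq (slSym (2 * m - 1))
      ((slSym (2 * m - 1)).map P)
    rw [hdisj] at h3
    simp only [finrank_bot, add_zero] at h3
    have h4 : finrank ℝ ↥(slSym (2 * m - 1) ⊔ (slSym (2 * m - 1)).map P)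
        ≤ finrank ℝ ↥(SpecialLinear.sl (Fin (2 * m - 1)) ℝ) := Submodule.finrank_le _
    omega
end

section
/- In su(2,1) (with Hermitian form η = diag(1,-1,1) so that indices 1,3 are 'positive' per the paper's convention with m=2), define U = i(E₁₁ + E₃₃ - 2E₂₂), V = i(E₁₁ - E₃₃), T = i(E₁₃ - E₃₁), S = E₁₃ + E₃₁, U' = E₁₂ - E₂₁, V' = i(E₁₂ + E₂₁), S' = E₂₃ + E₃₂, T' = i(E₂₃ - E₃₂). These eight elements form a real basis of su(2,1), and the linear maps P, J defined by J(U)=V, J(S)=T, P(U)=T, P(V)=S, J(U')=V', J(S')=T', P(U')=T', P(V')=S' (together with P²=1, J²=-1) form a complex product structure on su(2,1): PJ=-JP and N_P = N_J = 0. -/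
open Matrix

namespace SU21CPS

/-- A Hermitian form of signature (2,1). -/
noncomputable def eta : Matrix (Fin 3) (Fin 3) ℂ := !![1,0,0;0,1,0;0,0,-1]

/-- The real Lie algebra `su(2,1)`: trace-free complex `3×3` matrices `X` with
`Xᴴη + ηX = 0`, as a real submodule of matrices. -/
noncomputable def su21 : Submodule ℝ (Matrix (Fin 3) (Fin 3) ℂ) where
  carrier := {X | Xᴴ * eta + eta * X = 0 ∧ X.trace = 0}
  add_mem' := by
    rintro X Y ⟨h1, h2⟩ ⟨g1, g2⟩
    constructor
    · rw [Matrix.conjTranspose_add, Matrix.add_mul, Matrix.mul_add, add_add_add_comm, h1, g1,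
        add_zero]
    · simp [Matrix.trace_add, h2, g2]
  zero_mem' := by simp
  smul_mem' := by
    rintro r X ⟨h1, h2⟩
    constructor
    · rw [Matrix.conjTranspose_smul, star_trivial, Matrix.smul_mul, Matrix.mul_smul,
        ← smul_add, h1, smul_zero]
    · rw [Matrix.trace_smul, h2, smul_zero]

noncomputable def U : Matrix (Fin 3) (Fin 3) ℂ := !![Complex.I,0,0;0,-2*Complex.I,0;0,0,Complex.I]
noncomputable def V : Matrix (Fin 3) (Fin 3) ℂ := !![Complex.I,0,0;0,0,0;0,0,-Complex.I]
noncomputable def T : Matrix (Fin 3) (Fin 3) ℂ := !![0,0,Complex.I;0,0,0;-Complex.I,0,0]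
noncomputable def S : Matrix (Fin 3) (Fin 3) ℂ := !![0,0,1;0,0,0;1,0,0]
noncomputable def U' : Matrix (Fin 3) (Fin 3) ℂ := !![0,1,0;-1,0,0;0,0,0]
noncomputable def V' : Matrix (Fin 3) (Fin 3) ℂ := !![0,Complex.I,0;Complex.I,0,0;0,0,0]
noncomputable def S' : Matrix (Fin 3) (Fin 3) ℂ := !![0,0,0;0,0,1;0,1,0]
noncomputable def T' : Matrix (Fin 3) (Fin 3) ℂ := !![0,0,0;0,0,Complex.I;0,-Complex.I,0]

/-- A generic element of `su(2,1)` with real coordinates in the basis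
`U, V, S, T, U', V', S', T'`. -/
noncomputable def mk (a0 a1 a2 a3 a4 a5 a6 a7 : ℝ) : Matrix (Fin 3) (Fin 3) ℂ :=
  !![((a0:ℂ)+a1)*Complex.I, (a4:ℂ) + (a5:ℂ)*Complex.I, (a2:ℂ) + (a3:ℂ)*Complex.I;
     -(a4:ℂ) + (a5:ℂ)*Complex.I, -2*(a0:ℂ)*Complex.I, (a6:ℂ) + (a7:ℂ)*Complex.I;
     (a2:ℂ) - (a3:ℂ)*Complex.I, (a6:ℂ) - (a7:ℂ)*Complex.I, ((a0:ℂ)-a1)*Complex.I]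

lemma mk_mem (a0 a1 a2 a3 a4 a5 a6 a7 : ℝ) : mk a0 a1 a2 a3 a4 a5 a6 a7 ∈ su21 := by
  constructor
  · ext i j
    fin_cases i <;> fin_cases j <;>
      (simp only [Matrix.add_apply, Matrix.mul_apply, Matrix.conjTranspose_apply,
        Fin.sum_univ_three, Matrix.zero_apply]
       simp [mk, eta, Matrix.vecHead, Matrix.vecTail, Complex.ext_iff]) <;> ring
  · simp [Matrix.trace, Matrix.diag, Fin.sum_univ_three, mk, Complex.ext_iff]
    ring

lemma mk_combo (a0 a1 a2 a3 a4 a5 a6 a7 : ℝ) :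
    mk a0 a1 a2 a3 a4 a5 a6 a7 =
      a0 • U + a1 • V + a2 • S + a3 • T + a4 • U' + a5 • V' + a6 • S' + a7 • T' := by
  ext i j
  fin_cases i <;> fin_cases j <;>
    (simp only [Matrix.add_apply, Matrix.smul_apply]
     simp [mk, U, V, S, T, U', V', S', T', Matrix.vecHead, Matrix.vecTail, Complex.real_smul, Complex.ext_iff]) <;> ring

lemma U_mk : U = mk 1 0 0 0 0 0 0 0 := by
  ext i j; fin_cases i <;> fin_cases j <;> simp [mk, U]
lemma V_mk : V = mk 0 1 0 0 0 0 0 0 := by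
  ext i j; fin_cases i <;> fin_cases j <;> simp [mk, V]
lemma S_mk : S = mk 0 0 1 0 0 0 0 0 := by
  ext i j; fin_cases i <;> fin_cases j <;> simp [mk, S]
lemma T_mk : T = mk 0 0 0 1 0 0 0 0 := by
  ext i j; fin_cases i <;> fin_cases j <;> simp [mk, T]
lemma U'_mk : U' = mk 0 0 0 0 1 0 0 0 := by
  ext i j; fin_cases i <;> fin_cases j <;> simp [mk, U']
lemma V'_mk : V' = mk 0 0 0 0 0 1 0 0 := by
  ext i j; fin_cases i <;> fin_cases j <;> simp [mk, V']
lemma S'_mk : S' = mk 0 0 0 0 0 0 1 0 := by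
  ext i j; fin_cases i <;> fin_cases j <;> simp [mk, S']
lemma T'_mk : T' = mk 0 0 0 0 0 0 0 1 := by
  ext i j; fin_cases i <;> fin_cases j <;> simp [mk, T']

lemma U_mem : U ∈ su21 := U_mk ▸ mk_mem _ _ _ _ _ _ _ _
lemma V_mem : V ∈ su21 := V_mk ▸ mk_mem _ _ _ _ _ _ _ _
lemma S_mem : S ∈ su21 := S_mk ▸ mk_mem _ _ _ _ _ _ _ _
lemma T_mem : T ∈ su21 := T_mk ▸ mk_mem _ _ _ _ _ _ _ _
lemma U'_mem : U' ∈ su21 := U'_mk ▸ mk_mem _ _ _ _ _ _ _ _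
lemma V'_mem : V' ∈ su21 := V'_mk ▸ mk_mem _ _ _ _ _ _ _ _
lemma S'_mem : S' ∈ su21 := S'_mk ▸ mk_mem _ _ _ _ _ _ _ _
lemma T'_mem : T' ∈ su21 := T'_mk ▸ mk_mem _ _ _ _ _ _ _ _

lemma mem_rep {X : Matrix (Fin 3) (Fin 3) ℂ} (hX : X ∈ su21) :
    ∃ a0 a1 a2 a3 a4 a5 a6 a7 : ℝ, X = mk a0 a1 a2 a3 a4 a5 a6 a7 := by
  obtain ⟨h1, h2⟩ := hX
  have e : ∀ i j : Fin 3, (Xᴴ * eta + eta * X) i j = 0 := fun i j => by rw [h1]; rfl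
  have e00 := e 0 0; have e11 := e 1 1; have e22 := e 2 2
  have e01 := e 0 1; have e02 := e 0 2; have e12 := e 1 2
  simp only [Matrix.add_apply, Matrix.mul_apply, Matrix.conjTranspose_apply,
    Fin.sum_univ_three, Matrix.zero_apply] at e00 e11 e22 e01 e02 e12
  simp [eta, Matrix.vecHead, Matrix.vecTail, Complex.ext_iff] at e00 e11 e22 e01 e02 e12
  have tr : X 0 0 + X 1 1 + X 2 2 = 0 := by
    have := h2
    simpa [Matrix.trace, Matrix.diag, Fin.sum_univ_three, add_assoc] using this
  rw [Complex.ext_iff] at tr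
  simp at tr
  refine ⟨-(X 1 1).im/2, (X 0 0).im + (X 1 1).im/2, (X 0 2).re, (X 0 2).im,
    (X 0 1).re, (X 0 1).im, (X 1 2).re, (X 1 2).im, ?_⟩
  ext i j
  fin_cases i <;> fin_cases j <;>
    simp [mk, Matrix.vecHead, Matrix.vecTail, Complex.ext_iff] <;>
    constructor <;> linarith [e00, e11, e22, e01.1, e01.2, e02.1, e02.2, e12.1, e12.2, tr.1, tr.2]

set_option maxHeartbeats 2000000 in
lemma bracket_mk (a0 a1 a2 a3 a4 a5 a6 a7 b0 b1 b2 b3 b4 b5 b6 b7 : ℝ) :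
    ⁅mk a0 a1 a2 a3 a4 a5 a6 a7, mk b0 b1 b2 b3 b4 b5 b6 b7⁆ =
      mk (a4*b5 - a5*b4 + a6*b7 - a7*b6)
         (-2*a2*b3 + 2*a3*b2 + a4*b5 - a5*b4 - a6*b7 + a7*b6)
         (-2*a1*b3 + 2*a3*b1 + a4*b6 - a5*b7 - a6*b4 + a7*b5)
         (2*a1*b2 - 2*a2*b1 + a4*b7 + a5*b6 - a6*b5 - a7*b4)
         (-3*a0*b5 - a1*b5 + a2*b6 + a3*b7 + 3*a5*b0 + a5*b1 - a6*b2 - a7*b3)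
         (3*a0*b4 + a1*b4 - a2*b7 + a3*b6 - 3*a4*b0 - a4*b1 - a6*b3 + a7*b2)
         (3*a0*b7 - a1*b7 + a2*b4 + a3*b5 - a4*b2 - a5*b3 - 3*a7*b0 + a7*b1)
         (-3*a0*b6 + a1*b6 - a2*b5 + a3*b4 - a4*b3 + a5*b2 + 3*a6*b0 - a6*b1) := by
  ext i j
  fin_cases i <;> fin_cases j <;>
    (simp only [Ring.lie_def, Matrix.sub_apply, Matrix.mul_apply, Fin.sum_univ_three]
     simp [mk, Matrix.vecHead, Matrix.vecTail, Complex.ext_iff]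
     push_cast
     first
       | (constructor <;> first | trivial | ring)
       | ring
       | trivial
       | simp)

lemma P_mk (P : Module.End ℝ (Matrix (Fin 3) (Fin 3) ℂ))
    (hP2 : ∀ X ∈ su21, P (P X) = X)
    (hPU : P U = T) (hPV : P V = S) (hPU' : P U' = T') (hPV' : P V' = S')
    (a0 a1 a2 a3 a4 a5 a6 a7 : ℝ) :
    P (mk a0 a1 a2 a3 a4 a5 a6 a7) = mk a3 a2 a1 a0 a7 a6 a5 a4 := by
  have hPT : P T = U := by rw [← hPU]; exact hP2 U U_mem
  have hPS : P S = V := by rw [← hPV]; exact hP2 V V_mem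
  have hPT' : P T' = U' := by rw [← hPU']; exact hP2 U' U'_mem
  have hPS' : P S' = V' := by rw [← hPV']; exact hP2 V' V'_mem
  rw [mk_combo, mk_combo, map_add, map_add, map_add, map_add, map_add, map_add, map_add,
    _root_.map_smul, _root_.map_smul, _root_.map_smul, _root_.map_smul, _root_.map_smul, _root_.map_smul, _root_.map_smul, _root_.map_smul,
    hPU, hPV, hPS, hPT, hPU', hPV', hPS', hPT']
  module

lemma J_mk (J : Module.End ℝ (Matrix (Fin 3) (Fin 3) ℂ))
    (hJ2 : ∀ X ∈ su21, J (J X) = -X)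
    (hJU : J U = V) (hJS : J S = T) (hJU' : J U' = V') (hJS' : J S' = T')
    (a0 a1 a2 a3 a4 a5 a6 a7 : ℝ) :
    J (mk a0 a1 a2 a3 a4 a5 a6 a7) = mk (-a1) a0 (-a3) a2 (-a5) a4 (-a7) a6 := by
  have hJV : J V = -U := by rw [← hJU]; exact hJ2 U U_mem
  have hJT : J T = -S := by rw [← hJS]; exact hJ2 S S_mem
  have hJV' : J V' = -U' := by rw [← hJU']; exact hJ2 U' U'_mem
  have hJT' : J T' = -S' := by rw [← hJS']; exact hJ2 S' S'_mem
  rw [mk_combo, mk_combo, map_add, map_add, map_add, map_add, map_add, map_add, map_add,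
    _root_.map_smul, _root_.map_smul, _root_.map_smul, _root_.map_smul, _root_.map_smul, _root_.map_smul, _root_.map_smul, _root_.map_smul,
    hJU, hJV, hJS, hJT, hJU', hJV', hJS', hJT']
  module

set_option maxHeartbeats 4000000 in
/-- The eight elements `U = i(E₁₁+E₃₃-2E₂₂), V = i(E₁₁-E₃₃), T = i(E₁₃-E₃₁), S = E₁₃+E₃₁,
U' = E₁₂-E₂₁, V' = i(E₁₂+E₂₁), S' = E₂₃+E₃₂, T' = i(E₂₃-E₃₂)` form a real basis of `su(2,1)`,
and linear maps `P, J` (preserving `su(2,1)`, with `P² = 1`, `J² = -1` on it) defined by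
`J(U)=V, J(S)=T, P(U)=T, P(V)=S, J(U')=V', J(S')=T', P(U')=T', P(V')=S'` form a complex
product structure on `su(2,1)`: `PJ = -JP` and `N_P = N_J = 0`. -/
theorem su21_complex_product_structure
    (P J : Module.End ℝ (Matrix (Fin 3) (Fin 3) ℂ))
    (hPsu : ∀ X ∈ su21, P X ∈ su21) (hJsu : ∀ X ∈ su21, J X ∈ su21)
    (hP2 : ∀ X ∈ su21, P (P X) = X) (hJ2 : ∀ X ∈ su21, J (J X) = -X)
    (hJU : J U = V) (hJS : J S = T) (hPU : P U = T) (hPV : P V = S)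
    (hJU' : J U' = V') (hJS' : J S' = T') (hPU' : P U' = T') (hPV' : P V' = S') :
    (U ∈ su21 ∧ V ∈ su21 ∧ S ∈ su21 ∧ T ∈ su21 ∧
     U' ∈ su21 ∧ V' ∈ su21 ∧ S' ∈ su21 ∧ T' ∈ su21) ∧
    LinearIndependent ℝ ![U, V, S, T, U', V', S', T'] ∧
    Submodule.span ℝ {U, V, S, T, U', V', S', T'} = su21 ∧
    (∀ X ∈ su21, P (J X) = -(J (P X))) ∧
    (∀ X ∈ su21, ∀ Y ∈ su21, ⁅P X, P Y⁆ + ⁅X, Y⁆ - P ⁅P X, Y⁆ - P ⁅X, P Y⁆ = 0) ∧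
    (∀ X ∈ su21, ∀ Y ∈ su21, ⁅J X, J Y⁆ - ⁅X, Y⁆ - J ⁅J X, Y⁆ - J ⁅X, J Y⁆ = 0) := by
  refine ⟨⟨U_mem, V_mem, S_mem, T_mem, U'_mem, V'_mem, S'_mem, T'_mem⟩, ?_, ?_, ?_, ?_, ?_⟩
  · -- linear independence
    rw [Fintype.linearIndependent_iff]
    intro g hg
    have hsum : mk (g 0) (g 1) (g 2) (g 3) (g 4) (g 5) (g 6) (g 7) = 0 := by
      rw [mk_combo]
      simpa [Fin.sum_univ_eight] using hg
    have h := fun i j : Fin 3 => congrFun (congrFun hsum i) j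
    have h00 := h 0 0; have h11 := h 1 1; have h01 := h 0 1
    have h02 := h 0 2; have h12 := h 1 2
    simp [mk, Matrix.vecHead, Matrix.vecTail, Complex.ext_iff] at h00 h11 h01 h02 h12
    intro i
    fin_cases i <;> simp <;>
      first
        | linarith [h00, h11, h01.1, h01.2, h02.1, h02.2, h12.1, h12.2]
        | (first | exact h01.1 | exact h01.2 | exact h02.1 | exact h02.2
                 | exact h12.1 | exact h12.2)
  · -- span
    apply le_antisymm
    · rw [Submodule.span_le]
      rintro Z hZ
      simp only [Set.mem_insert_iff, Set.mem_singleton_iff] at hZ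
      rcases hZ with rfl | rfl | rfl | rfl | rfl | rfl | rfl | rfl
      · exact U_mem
      · exact V_mem
      · exact S_mem
      · exact T_mem
      · exact U'_mem
      · exact V'_mem
      · exact S'_mem
      · exact T'_mem
    · intro X hX
      obtain ⟨a0, a1, a2, a3, a4, a5, a6, a7, rfl⟩ := mem_rep hX
      rw [mk_combo]
      have mem : ∀ W ∈ ({U, V, S, T, U', V', S', T'} : Set (Matrix (Fin 3) (Fin 3) ℂ)),
          W ∈ Submodule.span ℝ ({U, V, S, T, U', V', S', T'} :
            Set (Matrix (Fin 3) (Fin 3) ℂ)) := fun W hW => Submodule.subset_span hW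
      refine add_mem (add_mem (add_mem (add_mem (add_mem (add_mem (add_mem
        (Submodule.smul_mem _ _ (mem U (by simp))) (Submodule.smul_mem _ _ (mem V (by simp))))
        (Submodule.smul_mem _ _ (mem S (by simp)))) (Submodule.smul_mem _ _ (mem T (by simp))))
        (Submodule.smul_mem _ _ (mem U' (by simp)))) (Submodule.smul_mem _ _ (mem V' (by simp))))
        (Submodule.smul_mem _ _ (mem S' (by simp)))) (Submodule.smul_mem _ _ (mem T' (by simp)))
  · -- PJ = -JP
    intro X hX
    obtain ⟨a0, a1, a2, a3, a4, a5, a6, a7, rfl⟩ := mem_rep hX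
    rw [J_mk J hJ2 hJU hJS hJU' hJS', P_mk P hP2 hPU hPV hPU' hPV',
      P_mk P hP2 hPU hPV hPU' hPV', J_mk J hJ2 hJU hJS hJU' hJS']
    ext i j
    fin_cases i <;> fin_cases j <;>
      (simp only [Matrix.neg_apply]
       simp [mk, Matrix.vecHead, Matrix.vecTail, Complex.ext_iff]
       try first
         | (constructor <;> first | trivial | ring)
         | ring
         | trivial
         | simp)
  · -- N_P = 0
    intro X hX Y hY
    obtain ⟨a0, a1, a2, a3, a4, a5, a6, a7, rfl⟩ := mem_rep hX
    obtain ⟨b0, b1, b2, b3, b4, b5, b6, b7, rfl⟩ := mem_rep hY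
    rw [P_mk P hP2 hPU hPV hPU' hPV', P_mk P hP2 hPU hPV hPU' hPV',
      bracket_mk, bracket_mk, bracket_mk, bracket_mk,
      P_mk P hP2 hPU hPV hPU' hPV', P_mk P hP2 hPU hPV hPU' hPV']
    ext i j
    fin_cases i <;> fin_cases j <;>
      (simp only [Matrix.add_apply, Matrix.sub_apply, Matrix.zero_apply]
       simp [mk, Matrix.vecHead, Matrix.vecTail, Complex.ext_iff]
       try push_cast
       try first
         | (constructor <;> first | trivial | ring)
         | ring
         | trivial
         | simp)
  · -- N_J = 0
    intro X hX Y hY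
    obtain ⟨a0, a1, a2, a3, a4, a5, a6, a7, rfl⟩ := mem_rep hX
    obtain ⟨b0, b1, b2, b3, b4, b5, b6, b7, rfl⟩ := mem_rep hY
    rw [J_mk J hJ2 hJU hJS hJU' hJS', J_mk J hJ2 hJU hJS hJU' hJS',
      bracket_mk, bracket_mk, bracket_mk, bracket_mk,
      J_mk J hJ2 hJU hJS hJU' hJS', J_mk J hJ2 hJU hJS hJU' hJS']
    ext i j
    fin_cases i <;> fin_cases j <;>
      (simp only [Matrix.add_apply, Matrix.sub_apply, Matrix.zero_apply]
       simp [mk, Matrix.vecHead, Matrix.vecTail, Complex.ext_iff]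
       try push_cast
       try first
         | (constructor <;> first | trivial | ring)
         | ring
         | trivial
         | simp)

end SU21CPS
end

section
/- Let G be a Lie group with Lie algebra 𝔤 carrying a complex product structure: linear maps P, J on 𝔤 with P²=1, J²=-1, PJ=-JP and vanishing Nijenhuis tensors. If J additionally satisfies [JX, Y] = J[X,Y] for all X, Y ∈ 𝔤, then 𝔤 is abelian. -/
/-- If a finite-dimensional real Lie algebra `𝔤` carries a complex product structure `(P, J)`
(`P² = 1`, `J² = -1`, `PJ = -JP`, vanishing Nijenhuis tensors) in which `J` additionally
satisfies `[JX, Y] = J[X,Y]` for all `X, Y`, then `𝔤` is abelian. -/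
theorem cps_biinvariant_J_abelian
    (L : Type*) [LieRing L] [LieAlgebra ℝ L] [FiniteDimensional ℝ L]
    (P J : Module.End ℝ L)
    (hP : P ^ 2 = 1) (hJ : J ^ 2 = -1) (hPJ : P * J = -(J * P))
    (hNP : ∀ X Y : L, ⁅P X, P Y⁆ + ⁅X, Y⁆ - P ⁅P X, Y⁆ - P ⁅X, P Y⁆ = 0)
    (hNJ : ∀ X Y : L, ⁅J X, J Y⁆ - ⁅X, Y⁆ - J ⁅J X, Y⁆ - J ⁅X, J Y⁆ = 0)
    (hbi : ∀ X Y : L, ⁅J X, Y⁆ = J ⁅X, Y⁆) :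
    ∀ X Y : L, ⁅X, Y⁆ = 0 := by
  have hP2 : ∀ x : L, P (P x) = x := by
    intro x
    have := DFunLike.congr_fun hP x
    simpa [pow_two, Module.End.mul_apply] using this
  have hJ2 : ∀ x : L, J (J x) = -x := by
    intro x
    have := DFunLike.congr_fun hJ x
    simpa [pow_two, Module.End.mul_apply] using this
  have hPJ' : ∀ x : L, P (J x) = -J (P x) := by
    intro x
    have := DFunLike.congr_fun hPJ x
    simpa [Module.End.mul_apply] using this
  have hJinj : ∀ x : L, J x = 0 → x = 0 := by
    intro x hx
    have := hJ2 x
    rw [hx, map_zero] at this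
    simpa using this.symm
  have hPinj : ∀ x : L, P x = 0 → x = 0 := by
    intro x hx
    have := hP2 x
    rw [hx, map_zero] at this
    exact this.symm
  have hbi2 : ∀ X Y : L, ⁅X, J Y⁆ = J ⁅X, Y⁆ := by
    intro X Y
    rw [← lie_skew X, ← lie_skew X Y, hbi, map_neg]
  have hJJ : ∀ X Y : L, ⁅J X, J Y⁆ = -⁅X, Y⁆ := by
    intro X Y
    rw [hbi, hbi2, hJ2]
  -- Equation A: substitute X ↦ J X in hNP
  have eqA : ∀ X Y : L, ⁅P X, P Y⁆ - ⁅X, Y⁆ + P ⁅P X, Y⁆ - P ⁅X, P Y⁆ = 0 := by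
    intro X Y
    have h := hNP (J X) Y
    simp only [hPJ', neg_lie, map_neg, neg_neg, hbi] at h
    apply hJinj
    simp only [map_add, map_sub]
    have h2 := congrArg Neg.neg h
    rw [neg_zero] at h2
    rw [← h2]
    abel
  -- Equation B: substitute Y ↦ J Y in hNP
  have eqB : ∀ X Y : L, ⁅P X, P Y⁆ - ⁅X, Y⁆ - P ⁅P X, Y⁆ + P ⁅X, P Y⁆ = 0 := by
    intro X Y
    have h := hNP X (J Y)
    simp only [hPJ', lie_neg, map_neg, neg_neg, hbi2] at h
    apply hJinj
    simp only [map_add, map_sub]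
    have h2 := congrArg Neg.neg h
    rw [neg_zero] at h2
    rw [← h2]
    abel
  -- Combining: ⁅P X, P Y⁆ = ⁅X, Y⁆
  have hPP : ∀ X Y : L, ⁅P X, P Y⁆ = ⁅X, Y⁆ := by
    intro X Y
    have hA := eqA X Y
    have hB := eqB X Y
    have h4 : (2 : ℝ) • (⁅P X, P Y⁆ - ⁅X, Y⁆) = 0 := by
      calc (2 : ℝ) • (⁅P X, P Y⁆ - ⁅X, Y⁆)
          = (⁅P X, P Y⁆ - ⁅X, Y⁆ + P ⁅P X, Y⁆ - P ⁅X, P Y⁆)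
            + (⁅P X, P Y⁆ - ⁅X, Y⁆ - P ⁅P X, Y⁆ + P ⁅X, P Y⁆) := by module
        _ = 0 := by rw [hA, hB, add_zero]
    have h5 : ⁅P X, P Y⁆ - ⁅X, Y⁆ = 0 := by
      rcases smul_eq_zero.mp h4 with h | h
      · norm_num at h
      · exact h
    exact sub_eq_zero.mp h5
  -- key: ⁅P X, Y⁆ = P ⁅X, Y⁆
  have key : ∀ X Y : L, ⁅P X, Y⁆ = P ⁅X, Y⁆ := by
    intro X Y
    have hA := eqA X Y
    have hB := eqB X Y
    have h4 : (2 : ℝ) • (P ⁅P X, Y⁆ - P ⁅X, P Y⁆) = 0 := by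
      calc (2 : ℝ) • (P ⁅P X, Y⁆ - P ⁅X, P Y⁆)
          = (⁅P X, P Y⁆ - ⁅X, Y⁆ + P ⁅P X, Y⁆ - P ⁅X, P Y⁆)
            - (⁅P X, P Y⁆ - ⁅X, Y⁆ - P ⁅P X, Y⁆ + P ⁅X, P Y⁆) := by module
        _ = 0 := by rw [hA, hB, sub_zero]
    have h5 : P ⁅P X, Y⁆ = P ⁅X, P Y⁆ := by
      rcases smul_eq_zero.mp h4 with h | h
      · norm_num at h
      · exact sub_eq_zero.mp h
    -- from hNP: 2 ⁅X,Y⁆ = 2 P ⁅P X, Y⁆ using hPP and h5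
    have h6 : (2 : ℝ) • (⁅X, Y⁆ - P ⁅P X, Y⁆) = 0 := by
      have h := hNP X Y
      rw [hPP, ← h5] at h
      calc (2 : ℝ) • (⁅X, Y⁆ - P ⁅P X, Y⁆)
          = ⁅X, Y⁆ + ⁅X, Y⁆ - P ⁅P X, Y⁆ - P ⁅P X, Y⁆ := by module
        _ = 0 := h
    have h7 : ⁅X, Y⁆ = P ⁅P X, Y⁆ := by
      rcases smul_eq_zero.mp h6 with h | h
      · norm_num at h
      · exact sub_eq_zero.mp h
    have := congrArg P h7
    rw [hP2] at this
    exact this.symm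
  -- Final step
  intro X Y
  have h := key (J X) (J Y)
  simp only [hPJ', neg_lie, hJJ, map_neg, neg_neg] at h
  have h8 : (2 : ℝ) • (P ⁅X, Y⁆) = 0 := by
    rw [key X Y] at h
    calc (2 : ℝ) • (P ⁅X, Y⁆) = P ⁅X, Y⁆ - -P ⁅X, Y⁆ := by module
      _ = P ⁅X, Y⁆ - P ⁅X, Y⁆ := by rw [← h]
      _ = 0 := sub_self _
  have h9 : P ⁅X, Y⁆ = 0 := by
    rcases smul_eq_zero.mp h8 with h' | h'
    · norm_num at h'
    · exact h'
  exact hPinj _ h9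
end
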